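/- Identifiability of probability of sufficiency in a confounded CBN: in the CBN with binary U, X, Y where U is a parent of both X and Y and X is a parent of Y, any i-compatible causal model satisfies Pr(X=0 ∧ Y=0 ∧ [X←1](Y=1)) = a·b·f1·(1−f2) + (1−a)·c·f3·(1−f4), where a = P(U=0), b = P(X=0|U=0), c = P(X=0|U=1), f1 = P(Y=0|U=0,X=0), f2 = P(Y=0|U=0,X=1), f3 = P(Y=0|U=1,X=0), f4 = P(Y=0|U=1,X=1). -/

import Mathlib

/-- A functional causal model: `F X e s` gives the value of the endogenous
variable `X` given the context `e` (values of the exogenous variables) and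
the values `s` of the other endogenous variables. -/
structure CM (E V α : Type) where
  F : V → E → (V → α) → α

/-- `s` is a solution of all the structural equations of `M` in context `e`. -/
def Solves {E V α : Type} (M : CM E V α) (e : E) (s : V → α) : Prop :=
  ∀ X, s X = M.F X e s

/-- `M` is recursive (acyclic): there is a strict total order `r` on the
endogenous variables such that if `r X Y` then the equation for `X`
does not depend on the value of `Y`. -/
def Recursive {E V α : Type} (M : CM E V α) : Prop :=
  ∃ r : V → V → Prop, IsStrictTotalOrder V r ∧
    ∀ X Y, r X Y → ∀ e s s', (∀ Z, Z ≠ Y → s Z = s' Z) → M.F X e s = M.F X e s'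

/-- Intervention: replace the equation of every variable `X` with `I X = some x`
by the constant equation `X = x`. -/
def intervene {E V α : Type} (M : CM E V α) (I : V → Option α) : CM E V α :=
  ⟨fun X e s => (I X).getD (M.F X e s)⟩

/-- Causal formulas: primitive events `X = x`, Boolean combinations, and
intervention formulas `[I]φ`. -/
inductive Formula (V α : Type) where
  | eq  : V → α → Formula V α
  | neg : Formula V α → Formula V α
  | and : Formula V α → Formula V α → Formula V α
  | or  : Formula V α → Formula V α → Formula V α
  | int : (V → Option α) → Formula V α → Formula V α

/-- Satisfaction of a formula in a causal setting `(M, e)`: primitive events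
hold in the (unique, for recursive models) solution, and `[I]φ` holds iff
`φ` holds in the intervened model. -/
def Sat {E V α : Type} : CM E V α → E → Formula V α → Prop
  | M, e, .eq X x => ∀ s, Solves M e s → s X = x
  | M, e, .neg φ => ¬ Sat M e φ
  | M, e, .and φ ψ => Sat M e φ ∧ Sat M e ψ
  | M, e, .or φ ψ => Sat M e φ ∨ Sat M e ψ
  | M, e, .int I φ => Sat (intervene M I) e φ

/-- The single intervention `Y ← y`. -/
def single {V α : Type} [DecidableEq V] (Y : V) (y : α) : V → Option α :=
  fun Z => if Z = Y then some y else none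

/-- The probability of a set of contexts under the distribution `p`. -/
noncomputable def PrOf {E : Type} [Fintype E] (p : E → ℝ) (S : Set E) : ℝ :=
  ∑ e, S.indicator p e

/-- The probability of a formula: the probability of the set of contexts in
which it holds. -/
noncomputable def prF {E V α : Type} [Fintype E] (p : E → ℝ) (M : CM E V α)
    (φ : Formula V α) : ℝ :=
  PrOf p {e | Sat M e φ}

/-- Mutual independence of a family of families of events: for every finite
collection of indices and every choice of one event per index, the probability
of the intersection is the product of the probabilities. -/
def MutIndep {E : Type} [Fintype E] {ι : Type} {κ : ι → Type} (p : E → ℝ)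
    (ev : (i : ι) → κ i → Set E) : Prop :=
  ∀ (s : Finset ι) (f : (i : ι) → κ i),
    PrOf p (⋂ i ∈ s, ev i (f i)) = ∏ i ∈ s, PrOf p (ev i (f i))

/-- The three variables of the CBN: `vU` (the root), `vX`, `vY`. -/
inductive V3 : Type where
  | vU | vX | vY
deriving DecidableEq

instance : Fintype V3 where
  elems := {V3.vU, V3.vX, V3.vY}
  complete := by intro x; cases x <;> simp

open V3

/-- The joint intervention `U ← u, X ← x`. -/
def dbl (u x : Bool) : V3 → Option Bool :=
  fun Z => if Z = vU then some u else if Z = vX then some x else none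

/-- The conditional events of the confounded CBN (`U → X`, `U → Y`, `X → Y`):
the value of `U`; the value of `X` given each setting of `U`; and the value of
`Y` given each of the four settings of `(U, X)`. -/
def ev16 {E : Type} (M : CM E V3 Bool) : Fin 7 → Bool → Set E
  | ⟨0, _⟩ => fun v => {e | Sat M e (.eq vU v)}
  | ⟨1, _⟩ => fun v => {e | Sat M e (.int (single vU false) (.eq vX v))}
  | ⟨2, _⟩ => fun v => {e | Sat M e (.int (single vU true) (.eq vX v))}
  | ⟨3, _⟩ => fun v => {e | Sat M e (.int (dbl false false) (.eq vY v))}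
  | ⟨4, _⟩ => fun v => {e | Sat M e (.int (dbl false true) (.eq vY v))}
  | ⟨5, _⟩ => fun v => {e | Sat M e (.int (dbl true false) (.eq vY v))}
  | ⟨6, _⟩ => fun v => {e | Sat M e (.int (dbl true true) (.eq vY v))}

/-!
Under the dependence constraints of the DAG, every intervened model has exactly one solution, read
off the response functions `U(e)`, `X_u(e)`, `Y_{u,x}(e)`. Splitting on the value of `U`, the event
`X = 0 ∧ Y = 0 ∧ [X ← 1](Y = 1)` is the disjoint union over `u` of
`{U = u} ∩ {X_u = 0} ∩ {Y_{u,0} = 0} ∩ {Y_{u,1} = 1}`, an intersection of four mutually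
independent cpt events; its probability is therefore the product of the corresponding cpt entries.
-/

section Probability

variable {E : Type} [Fintype E] {p : E → ℝ}

theorem prOf_union_of_disjoint {A B : Set E} (hAB : Disjoint A B) :
    PrOf p (A ∪ B) = PrOf p A + PrOf p B := by
  simp only [PrOf, Set.indicator_union_of_disjoint hAB, Finset.sum_add_distrib]

theorem prOf_compl (hp1 : ∑ e, p e = 1) (S : Set E) :
    PrOf p Sᶜ = 1 - PrOf p S := by
  rw [eq_sub_iff_add_eq, add_comm, ← prOf_union_of_disjoint disjoint_compl_right,
    Set.union_compl_self, PrOf, Set.indicator_univ, hp1]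

theorem MutIndep.prOf_inter₄ {ι β : Type} [DecidableEq ι] {ev : ι → β → Set E}
    (hind : MutIndep p ev) {i j k l : ι} (hijkl : [i, j, k, l].Nodup) (a b c d : β) :
    PrOf p (ev i a ∩ ev j b ∩ ev k c ∩ ev l d) =
      PrOf p (ev i a) * PrOf p (ev j b) * PrOf p (ev k c) * PrOf p (ev l d) := by
  have := hind {i, j, k, l} fun m => if m = i then a else if m = j then b else if m = k then c
    else d
  simp only [List.nodup_cons, List.mem_cons, List.not_mem_nil, or_false, not_or] at hijkl
  obtain ⟨⟨hij, hik, hil⟩, ⟨hjk, hjl⟩, hkl, -⟩ := hijkl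
  simpa [Finset.prod_insert, Set.inter_assoc, mul_assoc, hij, hik, hil, hjk, hjl, hkl, Ne.symm hij,
    Ne.symm hik, Ne.symm hil, Ne.symm hjk, Ne.symm hjl, Ne.symm hkl] using this

end Probability

namespace CM

variable {E α : Type}

structure RespectsConfoundedDAG (M : CM E V3 α) : Prop where
  F_vU : ∀ e s s', M.F vU e s = M.F vU e s'
  F_vX : ∀ e s s', s vU = s' vU → M.F vX e s = M.F vX e s'
  F_vY : ∀ e s s', s vU = s' vU → s vX = s' vX → M.F vY e s = M.F vY e s'

theorem RespectsConfoundedDAG.intervene {M : CM E V3 α} (h : M.RespectsConfoundedDAG)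
    (I : V3 → Option α) : (_root_.intervene M I).RespectsConfoundedDAG where
  F_vU e s s' := by simp only [_root_.intervene, h.F_vU e s s']
  F_vX e s s' hU := by simp only [_root_.intervene, h.F_vX e s s' hU]
  F_vY e s s' hU hX := by simp only [_root_.intervene, h.F_vY e s s' hU hX]

variable [Inhabited α] (M : CM E V3 α)

/- Response functions of the DAG. Under `RespectsConfoundedDAG` neither the `default` passed to
`F vU` nor the values given to non-parents matter. -/
def responseU (e : E) : α := M.F vU e fun _ => default

def responseX (u : α) (e : E) : α := M.F vX e fun _ => u

def responseY (u x : α) (e : E) : α := M.F vY e fun W => if W = vX then x else u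

def solution (e : E) : V3 → α
  | vU => M.responseU e
  | vX => M.responseX (M.responseU e) e
  | vY => M.responseY (M.responseU e) (M.responseX (M.responseU e) e) e

variable {M}

theorem solves_solution (h : M.RespectsConfoundedDAG) (e : E) : Solves M e (M.solution e)
  | vU => h.F_vU e _ _
  | vX => h.F_vX e _ _ rfl
  | vY => h.F_vY e _ _ rfl rfl

theorem eq_solution_of_solves (h : M.RespectsConfoundedDAG) {e : E} {s : V3 → α}
    (hs : Solves M e s) : s = M.solution e := by
  have hU : s vU = M.solution e vU := (hs vU).trans (h.F_vU e _ _)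
  have hX : s vX = M.solution e vX := (hs vX).trans (h.F_vX e _ _ hU)
  funext Z
  cases Z with
  | vU => exact hU
  | vX => exact hX
  | vY => exact (hs vY).trans (h.F_vY e _ _ hU hX)

theorem sat_eq_iff (h : M.RespectsConfoundedDAG) (e : E) (Z : V3) (v : α) :
    Sat M e (.eq Z v) ↔ M.solution e Z = v :=
  ⟨fun hv => hv _ (solves_solution h e),
    fun hv _ hs => eq_solution_of_solves h hs ▸ hv⟩

theorem sat_int_eq_iff (h : M.RespectsConfoundedDAG) (I : V3 → Option α) (e : E) (Z : V3)
    (v : α) : Sat M e (.int I (.eq Z v)) ↔ (intervene M I).solution e Z = v :=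
  sat_eq_iff (h.intervene I) e Z v

theorem sat_int_single_vU_eq_vX_iff (h : M.RespectsConfoundedDAG) (e : E) (u v : α) :
    Sat M e (.int (single vU u) (.eq vX v)) ↔ M.responseX u e = v := by
  simp [sat_int_eq_iff h, solution, responseX, responseU, _root_.intervene, single]

theorem sat_int_single_vX_eq_vY_iff (h : M.RespectsConfoundedDAG) (e : E) (x v : α) :
    Sat M e (.int (single vX x) (.eq vY v)) ↔ M.responseY (M.responseU e) x e = v := by
  simp [sat_int_eq_iff h, solution, responseX, responseY, responseU, _root_.intervene, single]

theorem sat_int_dbl_eq_vY_iff {M : CM E V3 Bool} (h : M.RespectsConfoundedDAG) (e : E)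
    (u x v : Bool) : Sat M e (.int (dbl u x) (.eq vY v)) ↔ M.responseY u x e = v := by
  simp [sat_int_eq_iff h, solution, responseX, responseY, responseU, _root_.intervene, dbl]

theorem sat_eq_true_iff_not_sat_eq_false {M : CM E V3 Bool} (h : M.RespectsConfoundedDAG)
    (e : E) (Z : V3) : Sat M e (.eq Z true) ↔ ¬ Sat M e (.eq Z false) := by
  simp [sat_eq_iff h]

end CM

section ev16

variable {E : Type} {M : CM E V3 Bool}

theorem ev16_true_eq_compl (h : M.RespectsConfoundedDAG) (i : Fin 7) :
    ev16 M i true = (ev16 M i false)ᶜ := by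
  ext e
  fin_cases i
  · exact CM.sat_eq_true_iff_not_sat_eq_false h e vU
  all_goals exact CM.sat_eq_true_iff_not_sat_eq_false (h.intervene _) e _

theorem setOf_sat_sufficiency_eq_union (h : M.RespectsConfoundedDAG) :
    {e | Sat M e (.and (.eq vX false) (.and (.eq vY false)
        (.int (single vX true) (.eq vY true))))} =
      ev16 M 0 false ∩ ev16 M 1 false ∩ ev16 M 3 false ∩ ev16 M 4 true ∪
        ev16 M 0 true ∩ ev16 M 2 false ∩ ev16 M 5 false ∩ ev16 M 6 true := by
  ext e
  simp only [ev16, Set.mem_union, Set.mem_inter_iff, Set.mem_ofPred_eq, Sat.eq_3,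
    CM.sat_eq_iff h, CM.sat_int_single_vU_eq_vX_iff h, CM.sat_int_single_vX_eq_vY_iff h,
    CM.sat_int_dbl_eq_vY_iff h, CM.solution]
  cases M.responseU e <;> grind

end ev16

theorem stmt16_general {E : Type} [Fintype E] (M : CM E V3 Bool)
    (hFU : ∀ e s s', M.F vU e s = M.F vU e s')
    (hFX : ∀ e s s', s vU = s' vU → M.F vX e s = M.F vX e s')
    (hFY : ∀ e s s', s vU = s' vU → s vX = s' vX → M.F vY e s = M.F vY e s')
    (p : E → ℝ) (hp1 : ∑ e, p e = 1)
    (a b c f1 f2 f3 f4 : ℝ)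
    (ha : PrOf p (ev16 M 0 false) = a) (hb : PrOf p (ev16 M 1 false) = b)
    (hc : PrOf p (ev16 M 2 false) = c)
    (hf1 : PrOf p (ev16 M 3 false) = f1) (hf2 : PrOf p (ev16 M 4 false) = f2)
    (hf3 : PrOf p (ev16 M 5 false) = f3) (hf4 : PrOf p (ev16 M 6 false) = f4)
    (hind : MutIndep p (ev16 M)) :
    PrOf p {e | Sat M e (.and (.eq vX false) (.and (.eq vY false)
        (.int (single vX true) (.eq vY true))))} =
      a * b * f1 * (1 - f2) + (1 - a) * c * f3 * (1 - f4) := by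
  have h : M.RespectsConfoundedDAG := ⟨hFU, hFX, hFY⟩
  have hcompl (i : Fin 7) : PrOf p (ev16 M i true) = 1 - PrOf p (ev16 M i false) := by
    rw [ev16_true_eq_compl h, prOf_compl hp1]
  have hdisj : Disjoint (ev16 M 0 false ∩ ev16 M 1 false ∩ ev16 M 3 false ∩ ev16 M 4 true)
      (ev16 M 0 true ∩ ev16 M 2 false ∩ ev16 M 5 false ∩ ev16 M 6 true) := by
    rw [ev16_true_eq_compl h 0]
    exact disjoint_compl_right.mono (fun _ he => he.1.1.1) fun _ he => he.1.1.1
  rw [setOf_sat_sufficiency_eq_union h, prOf_union_of_disjoint hdisj,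
    hind.prOf_inter₄ (by decide), hind.prOf_inter₄ (by decide),
    hcompl 0, hcompl 4, hcompl 6, ha, hb, hc, hf1, hf2, hf3, hf4]

/-- identifiability of the probability of sufficiency in the
confounded CBN with binary `U, X, Y`, where `U` is a parent of both `X` and
`Y` and `X` is a parent of `Y`: any i-compatible causal model satisfies
`Pr(X=0 ∧ Y=0 ∧ [X←1](Y=1)) = a·b·f1·(1−f2) + (1−a)·c·f3·(1−f4)`, where
`a = P(U=0)`, `b = P(X=0|U=0)`, `c = P(X=0|U=1)`, `f1 = P(Y=0|U=0,X=0)`,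
`f2 = P(Y=0|U=0,X=1)`, `f3 = P(Y=0|U=1,X=0)`, `f4 = P(Y=0|U=1,X=1)`. -/
theorem stmt16 {E : Type} [Fintype E] (M : CM E V3 Bool) (hrec : Recursive M)
    (hFU : ∀ e s s', M.F vU e s = M.F vU e s')
    (hFX : ∀ e s s', s vU = s' vU → M.F vX e s = M.F vX e s')
    (hFY : ∀ e s s', s vU = s' vU → s vX = s' vX → M.F vY e s = M.F vY e s')
    (p : E → ℝ) (hp0 : ∀ e, 0 ≤ p e) (hp1 : ∑ e, p e = 1)
    (a b c f1 f2 f3 f4 : ℝ)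
    (ha : PrOf p (ev16 M 0 false) = a) (hb : PrOf p (ev16 M 1 false) = b)
    (hc : PrOf p (ev16 M 2 false) = c)
    (hf1 : PrOf p (ev16 M 3 false) = f1) (hf2 : PrOf p (ev16 M 4 false) = f2)
    (hf3 : PrOf p (ev16 M 5 false) = f3) (hf4 : PrOf p (ev16 M 6 false) = f4)
    (hind : MutIndep p (ev16 M)) :
    PrOf p {e | Sat M e (.and (.eq vX false) (.and (.eq vY false)
        (.int (single vX true) (.eq vY true))))} =
      a * b * f1 * (1 - f2) + (1 - a) * c * f3 * (1 - f4) :=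
  stmt16_general M hFU hFX hFY p hp1 a b c f1 f2 f3 f4 ha hb hc hf1 hf2 hf3 hf4 hind
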